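/- arXiv:1902.01072 — 2 statements merged into one kernel-verified Lean document; each statement's English description precedes it below -/
import Mathlib

section
/- Let L be a linear integral operator Lφ(x) = ∫ V(x,y)φ(y)dy on C⁰ of the closed ball \overline{B_R} ⊂ ℝ^N, with V continuous nonnegative and V(x,y) > 0 whenever |x−y| ≤ r (some r > 0). Suppose for 0 < R < R' the operators L_R and L_{R'} (integration over B_R and B_{R'} respectively) admit principal eigenvalues λ_R, λ_{R'} with positive continuous eigenfunctions φ_R on \overline{B_R} and φ_{R'} on \overline{B_{R'}}. Then λ_R < λ_{R'}. -/
/-!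
Suppose `λ_{R'} ≤ λ_R` and let `t` be the minimum of `φ_{R'} / φ_R` on `B_R`, so that
`w = φ_{R'} - t φ_R ≥ 0` on `B_R` with equality somewhere. Evaluating both eigen-equations at a
contact point `x`, a zero of `w`, gives
`(λ_{R'} - λ_R) φ_{R'}(x) = ∫_{B_R} V(x,·) w + ∫_{B_{R'} \ B_R} V(x,·) φ_{R'}`,
where the left side is `≤ 0` and both integrals are `≥ 0`, so both vanish. The first forces `w = 0`
on `B_R ∩ B(x, r)`; as `B_R` is connected, `w ≡ 0` on `B_R`. The second then fails at a point
`x` of the sphere `‖x‖ = R`, since `V(x,·) φ_{R'} > 0` on the part of the annulus near `x`.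
-/

open MeasureTheory Set Metric Function

section Integral

variable {X : Type*} [TopologicalSpace X] [MeasurableSpace X] {μ : Measure X}
  [μ.IsOpenPosMeasure] {f : X → ℝ} {s : Set X}

theorem setIntegral_pos_of_pos_on_isOpen (hs : MeasurableSet s) (hf : IntegrableOn f s μ)
    (hnn : ∀ y ∈ s, 0 ≤ f y) {U : Set X} (hU : IsOpen U) (hUne : U.Nonempty) (hUs : U ⊆ s)
    (hpos : ∀ y ∈ U, 0 < f y) : 0 < ∫ y in s, f y ∂μ := by
  rw [setIntegral_pos_iff_support_of_nonneg_ae (ae_restrict_of_forall_mem hs hnn) hf]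
  exact (hU.measure_pos μ hUne).trans_le
    (measure_mono fun y hy => ⟨(hpos y hy).ne', hUs hy⟩)

theorem eqOn_zero_of_setIntegral_eq_zero (hs : MeasurableSet s)
    (hsi : s ⊆ closure (interior s)) (hf : ContinuousOn f s) (hfi : IntegrableOn f s μ)
    (hnn : ∀ y ∈ s, 0 ≤ f y) (h0 : ∫ y in s, f y ∂μ = 0) : EqOn f 0 s :=
  Measure.eqOn_of_ae_eq (μ := μ)
    ((setIntegral_eq_zero_iff_of_nonneg_ae (ae_restrict_of_forall_mem hs hnn) hfi).1 h0)
    hf continuousOn_const hsi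

end Integral

theorem IsPreconnected.subset_of_forall_ball_inter_subset {X : Type*} [PseudoMetricSpace X]
    {s Z : Set X} {r : ℝ} (hs : IsPreconnected s) (hr : 0 < r) (hZ : (s ∩ Z).Nonempty)
    (hball : ∀ x ∈ s ∩ Z, s ∩ ball x r ⊆ Z) : s ⊆ Z := by
  have hnear : ∀ y ∈ s ∩ thickening r (s ∩ Z), y ∈ Z := by
    rintro y ⟨hys, hyZ⟩
    obtain ⟨x, hxZ, hxy⟩ := mem_thickening_iff.1 hyZ
    exact hball x hxZ ⟨hys, mem_ball.2 hxy⟩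
  have hsub : s ⊆ thickening (r / 2) (s ∩ Z) := by
    refine hs.subset_of_closure_inter_subset isOpen_thickening ?_ ?_
    · obtain ⟨x, hx⟩ := hZ
      exact ⟨x, hx.1, self_subset_thickening (half_pos hr) _ hx⟩
    · rintro y ⟨hy, hys⟩
      have hyZ := cthickening_subset_thickening' hr (half_lt_self hr) _
        (closure_thickening_subset_cthickening _ _ hy)
      exact self_subset_thickening (half_pos hr) _ ⟨hys, hnear y ⟨hys, hyZ⟩⟩
  exact fun y hys => hnear y ⟨hys, thickening_mono (half_le_self hr.le) _ (hsub hys)⟩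

theorem IsCompact.exists_touching_multiple {X : Type*} [TopologicalSpace X] {K : Set X}
    (hK : IsCompact K) (hne : K.Nonempty) {φ ψ : X → ℝ} (hφ : ContinuousOn φ K)
    (hψ : ContinuousOn ψ K) (hpos : ∀ x ∈ K, 0 < φ x) :
    ∃ t, ∃ x₀ ∈ K, ψ x₀ = t * φ x₀ ∧ ∀ y ∈ K, t * φ y ≤ ψ y := by
  obtain ⟨x₀, hx₀, hmin⟩ :=
    hK.exists_isMinOn hne (hψ.div hφ fun x hx => (hpos x hx).ne')
  refine ⟨ψ x₀ / φ x₀, x₀, hx₀, (div_mul_cancel₀ _ (hpos x₀ hx₀).ne').symm, fun y hy => ?_⟩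
  exact (le_div_iff₀ (hpos y hy)).1 (hmin hy)

theorem contact_identity {α : Type*} [MeasurableSpace α] {μ : Measure α} {K K' : Set α}
    (hK : MeasurableSet K) (hKK' : K ⊆ K') {k φ ψ : α → ℝ} {lam lam' t : ℝ} {x₀ : α}
    (hφ : IntegrableOn (fun y => k y * φ y) K μ) (hψ : IntegrableOn (fun y => k y * ψ y) K' μ)
    (heig : ∫ y in K, k y * φ y ∂μ = lam * φ x₀)
    (heig' : ∫ y in K', k y * ψ y ∂μ = lam' * ψ x₀) (hx₀ : ψ x₀ = t * φ x₀) :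
    (lam' - lam) * ψ x₀ =
      (∫ y in K, k y * (ψ y - t * φ y) ∂μ) + ∫ y in K' \ K, k y * ψ y ∂μ := by
  have hgap : ∫ y in K, k y * (ψ y - t * φ y) ∂μ =
      (∫ y in K, k y * ψ y ∂μ) - t * ∫ y in K, k y * φ y ∂μ := by
    rw [← integral_const_mul, ← integral_sub (hψ.mono_set hKK') (hφ.const_mul t)]
    congr 1 with y
    ring
  rw [hgap, setIntegral_sdiff hK hψ hKK', heig, heig', hx₀]
  ring

section NormedSpace

variable {E : Type*} [NormedAddCommGroup E] [NormedSpace ℝ E] {R R' r : ℝ}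

theorem exists_dist_lt_of_norm_eq {x : E} (hx : ‖x‖ = R) (hR : 0 < R) (hRR' : R < R')
    (hr : 0 < r) : ∃ y, dist x y < r ∧ R < ‖y‖ ∧ ‖y‖ < R' := by
  have hm : 0 < min r (R' - R) := lt_min hr (sub_pos.2 hRR')
  set δ := min r (R' - R) / 2
  have hδ : 0 < δ := half_pos hm
  have hδr : δ < r := (half_lt_self hm).trans_le (min_le_left _ _)
  have hδR : δ < R' - R := (half_lt_self hm).trans_le (min_le_right _ _)
  have hnorm : ∀ c : ℝ, 0 ≤ c → ‖c • x‖ = c * R := fun c hc => by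
    rw [norm_smul, Real.norm_of_nonneg hc, hx]
  have hδx : ‖(δ / R) • x‖ = δ := by
    rw [hnorm _ (by positivity), div_mul_cancel₀ _ hR.ne']
  refine ⟨x + (δ / R) • x, by rwa [dist_self_add_right, hδx], ?_⟩
  rw [show x + (δ / R) • x = (1 + δ / R) • x by rw [add_smul, one_smul],
    hnorm _ (by positivity), add_mul, one_mul, div_mul_cancel₀ _ hR.ne']
  exact ⟨by linarith, by linarith⟩

variable [MeasurableSpace E] [OpensMeasurableSpace E] {μ : Measure E} [μ.IsOpenPosMeasure]

theorem setIntegral_annulus_pos {g : E → ℝ} (hR : 0 < R) (hRR' : R < R') (hr : 0 < r)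
    (hg : IntegrableOn g (closedBall 0 R' \ closedBall 0 R) μ)
    (hnn : ∀ y ∈ closedBall 0 R' \ closedBall 0 R, 0 ≤ g y) {x : E} (hx : ‖x‖ = R)
    (hpos : ∀ y ∈ ball x r ∩ (ball 0 R' \ closedBall 0 R), 0 < g y) :
    0 < ∫ y in closedBall 0 R' \ closedBall 0 R, g y ∂μ := by
  obtain ⟨y, hxy, hRy, hyR'⟩ := exists_dist_lt_of_norm_eq hx hR hRR' hr
  refine setIntegral_pos_of_pos_on_isOpen (measurableSet_closedBall.diff measurableSet_closedBall)
    hg hnn (isOpen_ball.inter (isOpen_ball.sdiff isClosed_closedBall)) ⟨y, ?_⟩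
    (fun z hz => ⟨ball_subset_closedBall hz.2.1, hz.2.2⟩) hpos
  simp only [mem_inter_iff, mem_sdiff, mem_ball, mem_closedBall, dist_zero_right, not_le]
  exact ⟨by rwa [dist_comm], hyR', hRy⟩

variable [ProperSpace E] [IsFiniteMeasureOnCompacts μ]

theorem contact_spreads {V : E → E → ℝ} (hVc : Continuous (uncurry V))
    (hVnn : ∀ x y, 0 ≤ V x y) (hVpos : ∀ x y, dist x y ≤ r → 0 < V x y)
    (hR : 0 < R) (hRR' : R ≤ R') {φ ψ : E → ℝ} {lam lam' t : ℝ}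
    (hφc : ContinuousOn φ (closedBall 0 R)) (hψc : ContinuousOn ψ (closedBall 0 R'))
    (hψnn : ∀ y ∈ closedBall 0 R', 0 ≤ ψ y) (hle : lam' ≤ lam)
    (hdom : ∀ y ∈ closedBall 0 R, t * φ y ≤ ψ y) {x₀ : E} (hx₀ : x₀ ∈ closedBall 0 R)
    (heig : ∫ y in closedBall 0 R, V x₀ y * φ y ∂μ = lam * φ x₀)
    (heig' : ∫ y in closedBall 0 R', V x₀ y * ψ y ∂μ = lam' * ψ x₀)
    (hx₀t : ψ x₀ = t * φ x₀) :
    closedBall 0 R ∩ ball x₀ r ⊆ {y | ψ y = t * φ y} ∧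
      ∫ y in closedBall 0 R' \ closedBall 0 R, V x₀ y * ψ y ∂μ = 0 := by
  have hKK' : closedBall (0 : E) R ⊆ closedBall 0 R' := closedBall_subset_closedBall hRR'
  have hk : Continuous (V x₀) := hVc.comp (Continuous.prodMk_right x₀)
  have hgapc : ContinuousOn (fun y => V x₀ y * (ψ y - t * φ y)) (closedBall 0 R) :=
    hk.continuousOn.mul ((hψc.mono hKK').sub (continuousOn_const.mul hφc))
  have hid := contact_identity (μ := μ) measurableSet_closedBall hKK'
    ((hk.continuousOn.mul hφc).integrableOn_compact (isCompact_closedBall 0 R))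
    ((hk.continuousOn.mul hψc).integrableOn_compact (isCompact_closedBall 0 R')) heig heig' hx₀t
  have hgap_nn : ∀ y ∈ closedBall 0 R, 0 ≤ V x₀ y * (ψ y - t * φ y) := fun y hy =>
    mul_nonneg (hVnn _ _) (sub_nonneg.2 (hdom y hy))
  have hgap := setIntegral_nonneg (μ := μ) measurableSet_closedBall hgap_nn
  have hann : 0 ≤ ∫ y in closedBall 0 R' \ closedBall 0 R, V x₀ y * ψ y ∂μ :=
    setIntegral_nonneg (measurableSet_closedBall.diff measurableSet_closedBall)
      fun y hy => mul_nonneg (hVnn x₀ y) (hψnn y hy.1)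
  have hlhs : (lam' - lam) * ψ x₀ ≤ 0 :=
    mul_nonpos_of_nonpos_of_nonneg (sub_nonpos.2 hle) (hψnn x₀ (hKK' hx₀))
  refine ⟨?_, by linarith⟩
  have hzero := eqOn_zero_of_setIntegral_eq_zero measurableSet_closedBall
    (by rw [interior_closedBall _ hR.ne', closure_ball _ hR.ne'])
    hgapc (hgapc.integrableOn_compact (isCompact_closedBall 0 R)) hgap_nn (by linarith)
  rintro y ⟨hy, hyr⟩
  have hVy : V x₀ y ≠ 0 := (hVpos x₀ y (mem_ball'.1 hyr).le).ne'
  simpa [hVy, sub_eq_zero] using hzero hy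

end NormedSpace

/-- Strict monotonicity of the principal eigenvalue of the truncated operators
`L_R φ(x) = ∫_{B_R} V(x,y) φ(y) dy` with respect to the radius `R`. -/
theorem stmt6 (N : ℕ) (hN : 1 ≤ N) (r : ℝ) (hr : 0 < r)
    (V : EuclideanSpace ℝ (Fin N) → EuclideanSpace ℝ (Fin N) → ℝ)
    (hVc : Continuous (Function.uncurry V)) (hVnn : ∀ x y, 0 ≤ V x y)
    (hVpos : ∀ x y, dist x y ≤ r → 0 < V x y)
    (R R' : ℝ) (hR : 0 < R) (hRR' : R < R')
    (lamR lamR' : ℝ)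
    (φR φR' : EuclideanSpace ℝ (Fin N) → ℝ)
    (hφRc : ContinuousOn φR (Metric.closedBall 0 R))
    (hφRpos : ∀ x ∈ Metric.closedBall (0 : EuclideanSpace ℝ (Fin N)) R, 0 < φR x)
    (heigR : ∀ x ∈ Metric.closedBall (0 : EuclideanSpace ℝ (Fin N)) R,
      (∫ y in Metric.closedBall (0 : EuclideanSpace ℝ (Fin N)) R, V x y * φR y) = lamR * φR x)
    (hφR'c : ContinuousOn φR' (Metric.closedBall 0 R'))
    (hφR'pos : ∀ x ∈ Metric.closedBall (0 : EuclideanSpace ℝ (Fin N)) R', 0 < φR' x)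
    (heigR' : ∀ x ∈ Metric.closedBall (0 : EuclideanSpace ℝ (Fin N)) R',
      (∫ y in Metric.closedBall (0 : EuclideanSpace ℝ (Fin N)) R', V x y * φR' y)
        = lamR' * φR' x) :
    lamR < lamR' := by
  by_contra! hle
  have hKK' := closedBall_subset_closedBall (x := (0 : EuclideanSpace ℝ (Fin N))) hRR'.le
  obtain ⟨t, x₀, hx₀, hx₀t, hdom⟩ := (isCompact_closedBall 0 R).exists_touching_multiple
    (nonempty_closedBall.2 hR.le) hφRc (hφR'c.mono hKK') hφRpos
  have hspread x (hx : x ∈ closedBall 0 R) (hxt : φR' x = t * φR x) :=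
    contact_spreads hVc hVnn hVpos hR hRR'.le hφRc hφR'c (fun y hy => (hφR'pos y hy).le) hle
      hdom hx (heigR x hx) (heigR' x (hKK' hx)) hxt
  have hall : closedBall 0 R ⊆ {x | φR' x = t * φR x} :=
    (convex_closedBall 0 R).isPreconnected.subset_of_forall_ball_inter_subset hr
      ⟨x₀, hx₀, hx₀t⟩ fun x hx => (hspread x hx.1 hx.2).1
  have : Nonempty (Fin N) := ⟨⟨0, hN⟩⟩
  obtain ⟨x₁, hx₁⟩ := exists_norm_eq (EuclideanSpace ℝ (Fin N)) hR.le
  have hx₁K : x₁ ∈ closedBall 0 R := mem_closedBall_zero_iff.2 hx₁.le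
  have hVφ_cont := ((hVc.comp (Continuous.prodMk_right x₁)).continuousOn.mul hφR'c)
  refine (setIntegral_annulus_pos hR hRR' hr ?_ ?_ hx₁ ?_).ne' (hspread x₁ hx₁K (hall hx₁K)).2
  · exact (hVφ_cont.integrableOn_compact (isCompact_closedBall 0 R')).mono_set sdiff_subset
  · exact fun y hy => mul_nonneg (hVnn x₁ y) (hφR'pos y hy.1).le
  · exact fun y hy => mul_pos (hVpos x₁ y (mem_ball'.1 hy.1).le)
      (hφR'pos y (ball_subset_closedBall hy.2.1))
end

section
/- Suppose λ₁ ≤ 1, where λ₁ is the principal periodic eigenvalue of Lφ(x)=∫V(x,y)g'(0)φ(y)dy with positive periodic eigenfunction φ_p satisfying inf φ_p > 0, and suppose g satisfies g(z) ≤ g'(0)z for z ≥ 0 with equality only at z = 0 (i.e., g(z) < g'(0)z for z > 0). Then the only nonnegative bounded continuous solution U of U(x) = ∫V(x,y)g(U(y))dy on ℝ^N is U ≡ 0, provided V is ℤ^N-periodic, V(x,y) > 0 for |x−y| ≤ r, and translations of bounded solutions have convergent subsequences (equicontinuity hypothesis on V). -/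
open MeasureTheory Set

/-!
Let `s` be the least constant with `U ≤ s φₚ`. If `s > 0`, then on the range of `U` the
nonlinearity falls short of its linearization by a uniform amount: `g (U y) + κ ≤ g'(0) s φₚ y`
for some `κ > 0`. Feeding this into the equation and using `L φₚ = λ₁ φₚ ≤ φₚ` gives
`U + κ ∫ V(x, ·) ≤ s φₚ`. The kernel mass `∫ V(x, ·)` is continuous, positive and periodic, hence
bounded below by some `c > 0`, and `φₚ` is bounded, so `U ≤ (s - κ c / sup φₚ) φₚ`, contradicting
the minimality of `s`.
-/

def IntPeriodic {ι α : Type*} (f : (ι → ℝ) → α) : Prop :=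
  ∀ (k : ι → ℤ) (x : ι → ℝ), f (x + fun i => (k i : ℝ)) = f x

namespace IntPeriodic

variable {ι α : Type*} {f : (ι → ℝ) → α}

theorem exists_mem_Icc_eq (hf : IntPeriodic f) (x : ι → ℝ) :
    ∃ z ∈ Icc (0 : ι → ℝ) 1, f z = f x := by
  refine ⟨x + fun i => ((-⌊x i⌋ : ℤ) : ℝ), ⟨fun i => ?_, fun i => ?_⟩, hf _ x⟩
  · simpa using Int.floor_le (x i)
  · simpa [add_comm] using (Int.lt_floor_add_one (x i)).le

theorem range_eq_image_Icc (hf : IntPeriodic f) : range f = f '' Icc 0 1 := by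
  refine (image_subset_range f _).antisymm' ?_
  rintro _ ⟨x, rfl⟩
  exact hf.exists_mem_Icc_eq x

theorem isCompact_range [TopologicalSpace α] (hf : IntPeriodic f) (hc : Continuous f) :
    IsCompact (range f) :=
  hf.range_eq_image_Icc ▸ isCompact_Icc.image hc

theorem exists_pos_le {f : (ι → ℝ) → ℝ} (hf : IntPeriodic f) (hc : Continuous f)
    (hpos : ∀ x, 0 < f x) : ∃ c > 0, ∀ x, c ≤ f x := by
  obtain ⟨_, ⟨x₀, rfl⟩, hx₀⟩ := (hf.isCompact_range hc).exists_isLeast (range_nonempty f)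
  exact ⟨f x₀, hpos x₀, fun x => hx₀ (mem_range_self x)⟩

theorem integral_kernel [Fintype ι] {V : (ι → ℝ) → (ι → ℝ) → ℝ}
    (hV : ∀ (k : ι → ℤ) (x y : ι → ℝ),
      V (x + fun i => (k i : ℝ)) (y + fun i => (k i : ℝ)) = V x y) :
    IntPeriodic fun x => ∫ y, V x y := by
  intro k x
  simp only [← integral_add_right_eq_self (V (x + fun i => (k i : ℝ))) (fun i => (k i : ℝ)), hV]

end IntPeriodic

section Kernel

variable {X Y : Type*} [MeasurableSpace Y] {μ : Measure Y}

theorem continuous_integral_of_integral_abs_sub_le [PseudoMetricSpace X] {V : X → Y → ℝ}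
    (hint : ∀ x, Integrable (V x) μ)
    (hequi : ∀ ε > (0:ℝ), ∃ δ > (0:ℝ), ∀ x₁ x₂ : X, dist x₁ x₂ ≤ δ →
      (∫ y, |V x₁ y - V x₂ y| ∂μ) ≤ ε) :
    Continuous fun x => ∫ y, V x y ∂μ := by
  refine Metric.continuous_iff.2 fun b ε hε => ?_
  obtain ⟨δ, hδ, hδε⟩ := hequi (ε / 2) (half_pos hε)
  refine ⟨δ, hδ, fun a ha => ?_⟩
  calc dist (∫ y, V a y ∂μ) (∫ y, V b y ∂μ) = ‖∫ y, (V a y - V b y) ∂μ‖ := by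
        rw [integral_sub (hint a) (hint b), dist_eq_norm]
    _ ≤ ∫ y, |V a y - V b y| ∂μ := norm_integral_le_integral_norm _
    _ ≤ ε / 2 := hδε a b ha.le
    _ < ε := half_lt_self hε

theorem integral_pos_of_pos_on_closedBall [PseudoMetricSpace Y] [μ.IsOpenPosMeasure]
    {f : Y → ℝ} (hnn : ∀ y, 0 ≤ f y) (hint : Integrable f μ) {x : Y} {r : ℝ} (hr : 0 < r)
    (hpos : ∀ y, dist x y ≤ r → 0 < f y) : 0 < ∫ y, f y ∂μ := by
  rw [integral_pos_iff_support_of_nonneg hnn hint]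
  refine (Metric.measure_closedBall_pos μ x hr).trans_le (measure_mono fun y hy => ?_)
  exact (hpos y (by rwa [dist_comm, ← Metric.mem_closedBall])).ne'

theorem integral_mul_add_le {V f φ : Y → ℝ} {κ c : ℝ} (hVnn : ∀ y, 0 ≤ V y)
    (hV : Integrable V μ) (hf : Integrable (fun y => V y * f y) μ)
    (hφ : Integrable (fun y => V y * φ y) μ) (hfφ : ∀ y, f y + κ ≤ c * φ y) :
    (∫ y, V y * f y ∂μ) + κ * ∫ y, V y ∂μ ≤ c * ∫ y, V y * φ y ∂μ := by
  rw [← integral_const_mul, ← integral_const_mul, ← integral_add hf (hV.const_mul κ)]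
  exact integral_mono (hf.add (hV.const_mul κ)) (hφ.const_mul c) fun y => by
    nlinarith [mul_le_mul_of_nonneg_left (hfφ y) (hVnn y)]

end Kernel

theorem exists_pos_add_le_mul {g : ℝ → ℝ} (hgc : Continuous g) {g₀ a : ℝ} (hg₀ : 0 < g₀)
    (ha : 0 < a) (hgzero : g 0 = 0) (hgub : ∀ z > (0:ℝ), g z < g₀ * z) (B : ℝ) :
    ∃ κ > 0, ∀ z t, 0 ≤ z → z ≤ B → z ≤ t → a ≤ t → g z + κ ≤ g₀ * t := by
  -- small `z` are handled by the slack `g₀ (t - z) ≥ g₀ a / 2`, the others by compactness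
  obtain ⟨z₀, ⟨hz₀, -⟩, hz₀min⟩ := isCompact_Icc.exists_isMinOn
    (nonempty_Icc.2 (le_max_right B (a / 2)))
    ((continuous_const.mul continuous_id).sub hgc).continuousOn
  have hκ₀ : 0 < g₀ * z₀ - g z₀ := sub_pos.2 (hgub z₀ (by linarith))
  refine ⟨min (g₀ * z₀ - g z₀) (g₀ * a / 2), lt_min hκ₀ (by positivity),
    fun z t hz hzB hzt hat => ?_⟩
  rcases lt_or_ge z (a / 2) with hza | hza
  · have hgz : g z ≤ g₀ * z :=
      hz.eq_or_lt.elim (fun h => by simp [← h, hgzero]) fun h => (hgub z h).le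
    nlinarith [min_le_right (g₀ * z₀ - g z₀) (g₀ * a / 2)]
  · have hmin : g₀ * z₀ - g z₀ ≤ g₀ * z - g z := hz₀min ⟨hza, hzB.trans (le_max_left _ _)⟩
    nlinarith [min_le_left (g₀ * z₀ - g z₀) (g₀ * a / 2)]

theorem eq_zero_of_forall_le_mul_imp_add_le {X : Type*} {U φ : X → ℝ} {m : ℝ} (hm : 0 < m)
    (hmφ : ∀ x, m ≤ φ x) (hφ : BddAbove (range φ)) (hU : ∀ x, 0 ≤ U x)
    (hUB : BddAbove (range U))
    (himp : ∀ s > (0:ℝ), (∀ x, U x ≤ s * φ x) → ∃ δ > (0:ℝ), ∀ x, U x + δ ≤ s * φ x)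
    (x : X) : U x = 0 := by
  have : Nonempty X := ⟨x⟩
  obtain ⟨M, hM⟩ := hφ
  obtain ⟨B, hB⟩ := hUB
  have hφpos : ∀ x, 0 < φ x := fun x => hm.trans_le (hmφ x)
  have hMpos : 0 < M := (hφpos x).trans_le (hM (mem_range_self x))
  have hbdd : BddAbove (range fun x => U x / φ x) := ⟨B / m, forall_mem_range.2 fun x =>
    div_le_div₀ ((hU x).trans (hB (mem_range_self x))) (hB (mem_range_self x)) hm (hmφ x)⟩
  set s := sSup (range fun x => U x / φ x)
  have hle : ∀ x, U x ≤ s * φ x := fun x =>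
    (div_le_iff₀ (hφpos x)).1 (le_csSup hbdd (mem_range_self x))
  rcases le_or_gt s 0 with hs | hs
  · exact le_antisymm (by nlinarith [hle x, hφpos x]) (hU x)
  obtain ⟨δ, hδ, hUδ⟩ := himp s hs hle
  have : s ≤ s - δ / M := csSup_le (range_nonempty _) <| forall_mem_range.2 fun x => by
    have hδM : δ / M * φ x ≤ δ := by
      rw [div_mul_eq_mul_div, div_le_iff₀ hMpos]
      exact mul_le_mul_of_nonneg_left (hM (mem_range_self x)) hδ.le
    rw [div_le_iff₀ (hφpos x), sub_mul]
    linarith [hUδ x]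
  linarith [div_pos hδ hMpos]

theorem stmt10_general (N : ℕ) (r : ℝ) (hr : 0 < r)
    (V : (Fin N → ℝ) → (Fin N → ℝ) → ℝ) (hVnn : ∀ x y, 0 ≤ V x y)
    (hVper : ∀ (k : Fin N → ℤ) (x y : Fin N → ℝ),
      V (x + fun i => (k i : ℝ)) (y + fun i => (k i : ℝ)) = V x y)
    (hVpos : ∀ x y, dist x y ≤ r → 0 < V x y)
    (hVint : ∀ x, Integrable (V x))
    (hVequi : ∀ ε > (0:ℝ), ∃ δ > (0:ℝ), ∀ x₁ x₂ : Fin N → ℝ, dist x₁ x₂ ≤ δ →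
      (∫ y, |V x₁ y - V x₂ y|) ≤ ε)
    (g : ℝ → ℝ) (hgc : Continuous g)
    (hgzero : g 0 = 0) (g0 : ℝ) (hg0 : 0 < g0)
    (hgub : ∀ z > (0:ℝ), g z < g0 * z)
    (lam1 : ℝ) (hlam : lam1 ≤ 1)
    (φp : (Fin N → ℝ) → ℝ) (hφpc : Continuous φp)
    (hφpper : ∀ (k : Fin N → ℤ) (x : Fin N → ℝ), φp (x + fun i => (k i : ℝ)) = φp x)
    (hφppos : ∃ m > (0:ℝ), ∀ x, m ≤ φp x)
    (heig : ∀ x, (∫ y, V x y * (g0 * φp y)) = lam1 * φp x) :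
    ∀ U : (Fin N → ℝ) → ℝ, Continuous U → (∀ x, 0 ≤ U x) → (∃ B, ∀ x, U x ≤ B) →
      (∀ x, U x = ∫ y, V x y * g (U y)) → ∀ x, U x = 0 := by
  intro U hUc hUnn ⟨B, hB⟩ hUeq
  obtain ⟨m, hm, hmφ⟩ := hφppos
  have hφ_range : IsCompact (range φp) := IntPeriodic.isCompact_range hφpper hφpc
  obtain ⟨c, hc, hcV⟩ := IntPeriodic.exists_pos_le (IntPeriodic.integral_kernel hVper)
    (continuous_integral_of_integral_abs_sub_le hVint hVequi)
    fun x => integral_pos_of_pos_on_closedBall (hVnn x) (hVint x) hr (hVpos x)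
  obtain ⟨Cg, hCg⟩ := isCompact_Icc.exists_bound_of_continuousOn (s := Icc 0 B) hgc.continuousOn
  obtain ⟨Cφ, hCφ⟩ := hφ_range.isBounded.exists_norm_le
  have hgU_int : ∀ x, Integrable (fun y => V x y * g (U y)) := fun x =>
    (hVint x).mul_bdd (hgc.comp hUc).aestronglyMeasurable
      (ae_of_all _ fun y => hCg _ ⟨hUnn y, hB y⟩)
  have hφ_int : ∀ x, Integrable (fun y => V x y * φp y) := fun x =>
    (hVint x).mul_bdd hφpc.aestronglyMeasurable (ae_of_all _ fun y => hCφ _ (mem_range_self y))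
  have hLφ : ∀ x, g0 * ∫ y, V x y * φp y = lam1 * φp x := fun x => by
    rw [← heig x, ← integral_const_mul]
    simp_rw [mul_left_comm]
  refine eq_zero_of_forall_le_mul_imp_add_le hm hmφ hφ_range.bddAbove hUnn
    ⟨B, forall_mem_range.2 hB⟩ fun s hs hUs => ?_
  obtain ⟨κ, hκ, hgap⟩ := exists_pos_add_le_mul hgc hg0 (mul_pos hs hm) hgzero hgub B
  refine ⟨κ * c, by positivity, fun x => ?_⟩
  have hstep := integral_mul_add_le (c := s * g0) (hVnn x) (hVint x) (hgU_int x) (hφ_int x)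
    fun y => by
      linarith [hgap (U y) (s * φp y) (hUnn y) (hB y) (hUs y) (by nlinarith [hmφ y])]
  rw [← hUeq x, mul_assoc, hLφ x] at hstep
  nlinarith [mul_le_mul_of_nonneg_left (hcV x) hκ.le,
    mul_le_mul_of_nonneg_right hlam (mul_pos hs (hm.trans_le (hmφ x))).le]

/-- If the principal periodic eigenvalue `λ₁` of the linearization is `≤ 1`, and
`g(z) < g'(0) z` for `z > 0`, then the only nonnegative bounded continuous solution of the
stationary equation `U(x) = ∫ V(x,y) g(U(y)) dy` is `U ≡ 0`. -/
theorem stmt10 (N : ℕ) (hN : 1 ≤ N) (r : ℝ) (hr : 0 < r)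
    (V : (Fin N → ℝ) → (Fin N → ℝ) → ℝ) (hVnn : ∀ x y, 0 ≤ V x y)
    (hVmeas : Measurable (Function.uncurry V))
    (hVper : ∀ (k : Fin N → ℤ) (x y : Fin N → ℝ),
      V (x + fun i => (k i : ℝ)) (y + fun i => (k i : ℝ)) = V x y)
    (hVpos : ∀ x y, dist x y ≤ r → 0 < V x y)
    (hVint : ∀ x, Integrable (V x))
    (hVbdd : ∃ B, ∀ x, (∫ y, V x y) ≤ B)
    (hVequi : ∀ ε > (0:ℝ), ∃ δ > (0:ℝ), ∀ x₁ x₂ : Fin N → ℝ, dist x₁ x₂ ≤ δ →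
      (∫ y, |V x₁ y - V x₂ y|) ≤ ε)
    (g : ℝ → ℝ) (hgc : Continuous g) (hgmono : MonotoneOn g (Set.Ici 0))
    (hgzero : g 0 = 0) (g0 : ℝ) (hg0 : 0 < g0)
    (hgub : ∀ z > (0:ℝ), g z < g0 * z)
    (lam1 : ℝ) (hlam : lam1 ≤ 1)
    (φp : (Fin N → ℝ) → ℝ) (hφpc : Continuous φp)
    (hφpper : ∀ (k : Fin N → ℤ) (x : Fin N → ℝ), φp (x + fun i => (k i : ℝ)) = φp x)
    (hφppos : ∃ m > (0:ℝ), ∀ x, m ≤ φp x)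
    (heig : ∀ x, (∫ y, V x y * (g0 * φp y)) = lam1 * φp x) :
    ∀ U : (Fin N → ℝ) → ℝ, Continuous U → (∀ x, 0 ≤ U x) → (∃ B, ∀ x, U x ≤ B) →
      (∀ x, U x = ∫ y, V x y * g (U y)) → ∀ x, U x = 0 :=
  stmt10_general N r hr V hVnn hVper hVpos hVint hVequi g hgc hgzero g0 hg0 hgub lam1 hlam φp hφpc
    hφpper hφppos heig
end
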